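/- Let 0 < λ ≤ Λ, β = (Λ/λ)(N−1)+1 > 2, δ > 0, u(x) = (1+|x|²)^{-δ/2}, and b(x) = λ(2−β+δ) x/(1+|x|²). Then M⁺_{λ,Λ}(D²u(x)) − b(x)·Du(x) ≥ βδλ (1+|x|²)^{-δ/2-2} ≥ 0 for all x ∈ ℝ^N, while lim_{|x|→∞} b(x)·x = λ(2−β+δ) > λ(2−β). -/

import Mathlib

open Matrix Real Filter
open scoped RealInnerProductSpace

/-- Pucci maximal operator `M⁺_{λ,Λ}(M) = sup_{λI ≤ A ≤ ΛI} -Tr(A M)`. -/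
noncomputable def pucciSup {N : ℕ} (lam Lam : ℝ) (M : Matrix (Fin N) (Fin N) ℝ) : ℝ :=
  sSup {t : ℝ | ∃ A : Matrix (Fin N) (Fin N) ℝ, A.IsSymm ∧
    (A - lam • (1 : Matrix (Fin N) (Fin N) ℝ)).PosSemidef ∧
    (Lam • (1 : Matrix (Fin N) (Fin N) ℝ) - A).PosSemidef ∧
    t = -(A * M).trace}

/-- Pucci minimal operator `M⁻_{λ,Λ}(M) = inf_{λI ≤ A ≤ ΛI} -Tr(A M)`. -/
noncomputable def pucciInf {N : ℕ} (lam Lam : ℝ) (M : Matrix (Fin N) (Fin N) ℝ) : ℝ :=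
  sInf {t : ℝ | ∃ A : Matrix (Fin N) (Fin N) ℝ, A.IsSymm ∧
    (A - lam • (1 : Matrix (Fin N) (Fin N) ℝ)).PosSemidef ∧
    (Lam • (1 : Matrix (Fin N) (Fin N) ℝ) - A).PosSemidef ∧
    t = -(A * M).trace}

/-- Hessian matrix of `u : ℝ^N → ℝ` at `x`. -/
noncomputable def hess {N : ℕ} (u : EuclideanSpace ℝ (Fin N) → ℝ)
    (x : EuclideanSpace ℝ (Fin N)) : Matrix (Fin N) (Fin N) ℝ :=
  fun i j => iteratedFDeriv ℝ 2 u x ![EuclideanSpace.single i 1, EuclideanSpace.single j 1]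


variable {N : ℕ}

local notation "E" => EuclideanSpace ℝ (Fin N)

lemma one_add_sq_pos (x : E) : (0:ℝ) < 1 + ‖x‖^2 := by positivity

lemma hasFDerivAt_base (p : ℝ) (x : E) :
    HasFDerivAt (fun y : E => (1 + ‖y‖^2) ^ p)
      ((p * (1 + ‖x‖^2) ^ (p - 1) * 2) • innerSL ℝ x) x := by
  have h1 : HasFDerivAt (fun y : E => 1 + ‖y‖^2) (2 • innerSL ℝ x) x := by
    have := ((hasFDerivAt_id x).norm_sq).const_add (1:ℝ)
    simpa using this
  have h2 : HasDerivAt (fun r : ℝ => r ^ p) (p * (1 + ‖x‖^2) ^ (p - 1)) (1 + ‖x‖^2) :=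
    Real.hasDerivAt_rpow_const (Or.inl (ne_of_gt (one_add_sq_pos x)))
  have h3 := h2.comp_hasFDerivAt x h1
  refine h3.congr_fderiv ?_
  ext v
  simp [mul_assoc, mul_comm]
  ring

lemma gradient_base (p : ℝ) (x : E) :
    HasGradientAt (fun y : E => (1 + ‖y‖^2) ^ p)
      ((p * (1 + ‖x‖^2) ^ (p - 1) * 2) • x) x := by
  rw [hasGradientAt_iff_hasFDerivAt]
  exact (hasFDerivAt_base p x).congr_fderiv (by ext v; simp [InnerProductSpace.toDual_apply_apply, real_inner_smul_left])

lemma fderiv_base (p : ℝ) :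
    (fderiv ℝ (fun y : E => (1 + ‖y‖^2) ^ p)) =
      fun y : E => (fun y : E => (p * (1 + ‖y‖^2) ^ (p - 1) * 2)) y • innerSL ℝ y := by
  funext y
  exact (hasFDerivAt_base p y).fderiv

noncomputable def innerCLM : E →L[ℝ] E →L[ℝ] ℝ :=
  LinearMap.mkContinuous₂
    (LinearMap.mk₂ ℝ (fun x y : E => ⟪x, y⟫)
      (fun _ _ _ => inner_add_left _ _ _)
      (fun _ _ _ => real_inner_smul_left _ _ _)
      (fun _ _ _ => inner_add_right _ _ _)
      (fun _ _ _ => real_inner_smul_right _ _ _)) 1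
    (fun x y => by simpa using abs_real_inner_le_norm x y)

@[simp] lemma innerCLM_apply (x v : E) : innerCLM x v = ⟪x, v⟫ := rfl

lemma hasFDerivAt_base2 (p : ℝ) (x : E) :
    HasFDerivAt (fun y : E => (p * (1 + ‖y‖^2) ^ (p - 1) * 2) • innerCLM (N := N) y)
      ((p * (1 + ‖x‖^2) ^ (p - 1) * 2) • innerCLM (N := N) +
        (((p - 1) * (1 + ‖x‖^2) ^ (p - 2) * 2 * (p * 2)) • innerSL ℝ x).smulRight
          (innerCLM x)) x := by
  have hc : HasFDerivAt (fun y : E => p * (1 + ‖y‖^2) ^ (p - 1) * 2)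
      (((p - 1) * (1 + ‖x‖^2) ^ (p - 2) * 2 * (p * 2)) • innerSL ℝ x) x := by
    have := ((hasFDerivAt_base (p - 1) x).const_mul p).mul_const (2:ℝ)
    refine this.congr_fderiv ?_
    ext v; simp; rw [show p - 1 - 1 = p - 2 by ring]; ring
  have hf : HasFDerivAt (fun y : E => innerCLM (N := N) y) (innerCLM (N := N)) x :=
    (innerCLM (N := N)).hasFDerivAt
  have := hc.smul hf
  exact this

lemma fderiv_base' (p : ℝ) :
    (fderiv ℝ (fun y : E => (1 + ‖y‖^2) ^ p)) =
      fun y : E => (p * (1 + ‖y‖^2) ^ (p - 1) * 2) • innerCLM (N := N) y := by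
  funext y
  rw [(hasFDerivAt_base p y).fderiv]
  ext v
  simp

lemma hess_base (p : ℝ) (x : E) (i j : Fin N) :
    hess (fun y : E => (1 + ‖y‖^2) ^ p) x i j =
      (p * (1 + ‖x‖^2) ^ (p - 1) * 2) * (if i = j then 1 else 0)
        + ((p - 1) * (1 + ‖x‖^2) ^ (p - 2) * 2 * (p * 2)) * (x i * x j) := by
  rw [hess, iteratedFDeriv_two_apply, fderiv_base', (hasFDerivAt_base2 p x).fderiv]
  simp [EuclideanSpace.inner_single_left, EuclideanSpace.inner_single_right,
    EuclideanSpace.single_apply, real_inner_smul_left]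
  rcases eq_or_ne i j with h | h
  · subst h; simp; ring
  · rw [if_neg h, if_neg (Ne.symm h)]; ring

-- ## Pucci machinery

lemma quad_explicit (B : Matrix (Fin N) (Fin N) ℝ) (v : Fin N → ℝ) :
    star v ⬝ᵥ (B *ᵥ v) = ∑ i, ∑ j, v i * B i j * v j := by
  simp [dotProduct, Matrix.mulVec, Finset.mul_sum, mul_assoc]

lemma psd_of_quad (B : Matrix (Fin N) (Fin N) ℝ) (hsym : ∀ i j, B j i = B i j)
    (hq : ∀ v : Fin N → ℝ, 0 ≤ ∑ i, ∑ j, v i * B i j * v j) : B.PosSemidef := by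
  rw [Matrix.posSemidef_iff_dotProduct_mulVec]
  constructor
  · ext i j
    simp [Matrix.conjTranspose_apply, hsym i j]
  · intro v
    rw [quad_explicit]
    exact hq v

lemma quad_form (e c : ℝ) (w v : Fin N → ℝ) :
    ∑ i, ∑ j, v i * ((if i = j then e else 0) - c * (w i * w j)) * v j
      = e * (∑ i, (v i)^2) - c * (∑ i, w i * v i)^2 := by
  have key : ∀ i j : Fin N, v i * ((if i = j then e else 0) - c * (w i * w j)) * v j
      = (if i = j then e * (v i)^2 else 0) - c * ((w i * v i) * (w j * v j)) := by
    intro i j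
    rcases eq_or_ne i j with h | h
    · subst h; simp; ring
    · simp [h]; ring
  simp only [key, Finset.sum_sub_distrib, Finset.sum_ite_eq, Finset.mem_univ, if_true]
  congr 1
  · rw [Finset.mul_sum]
  · rw [sq, Finset.sum_mul_sum, Finset.mul_sum]
    apply Finset.sum_congr rfl; intro i _
    rw [Finset.mul_sum]

lemma trace_explicit (A M : Matrix (Fin N) (Fin N) ℝ) :
    (A * M).trace = ∑ i, ∑ j, A i j * M j i := by
  simp [Matrix.trace, Matrix.mul_apply, Matrix.diag]

lemma trace_form (d c K1 K2 : ℝ) (w : Fin N → ℝ) :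
    ∑ i : Fin N, ∑ j : Fin N, ((if i = j then d else 0) - c * (w i * w j)) *
        (K1 * (if j = i then 1 else 0) + K2 * (w j * w i))
      = d * K1 * N + d * K2 * (∑ i, (w i)^2) - c * K1 * (∑ i, (w i)^2)
          - c * K2 * (∑ i, (w i)^2)^2 := by
  have key : ∀ i j : Fin N, ((if i = j then d else 0) - c * (w i * w j)) *
        (K1 * (if j = i then 1 else 0) + K2 * (w j * w i))
      = ((if i = j then d * K1 else 0) + (if i = j then d * K2 * (w i)^2 else 0))
          - (c * K1 * ((if i = j then (w i)^2 else 0)) + c * K2 * ((w i)^2 * (w j)^2)) := by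
    intro i j
    rcases eq_or_ne i j with h | h
    · subst h; simp; ring
    · simp [h, Ne.symm h]; ring
  simp only [key, Finset.sum_add_distrib, Finset.sum_sub_distrib, Finset.sum_ite_eq,
    Finset.mem_univ, if_true, ← Finset.mul_sum, Finset.sum_const, Finset.card_univ,
    Fintype.card_fin, nsmul_eq_mul]
  rw [sq ((∑ i, (w i)^2)), Finset.sum_mul_sum]
  simp only [← Finset.mul_sum]
  ring

lemma quad_single (B : Matrix (Fin N) (Fin N) ℝ) (hB : B.PosSemidef) (i : Fin N) :
    0 ≤ B i i := by
  have := hB.dotProduct_mulVec_nonneg (Pi.single i 1)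
  simpa [Matrix.mulVec_single, single_dotProduct] using this

lemma quad_pair (B : Matrix (Fin N) (Fin N) ℝ) (hB : B.PosSemidef) (i j : Fin N) :
    0 ≤ B i i + B i j + B j i + B j j := by
  have h := hB.dotProduct_mulVec_nonneg (Pi.single i 1 + Pi.single j 1)
  simp [Matrix.mulVec_add, Matrix.mulVec_single, dotProduct_add, add_dotProduct,
    single_dotProduct] at h
  linarith

lemma quad_pair_sub (B : Matrix (Fin N) (Fin N) ℝ) (hB : B.PosSemidef) (i j : Fin N) :
    0 ≤ B i i - B i j - B j i + B j j := by
  have h := hB.dotProduct_mulVec_nonneg (Pi.single i 1 - Pi.single j 1)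
  simp [Matrix.mulVec_sub, Matrix.mulVec_single, dotProduct_sub, sub_dotProduct,
    single_dotProduct] at h
  linarith

lemma entry_le {lam Lam : ℝ} (hlam : 0 ≤ lam) {A : Matrix (Fin N) (Fin N) ℝ}
    (h1 : (A - lam • (1 : Matrix (Fin N) (Fin N) ℝ)).PosSemidef)
    (h2 : (Lam • (1 : Matrix (Fin N) (Fin N) ℝ) - A).PosSemidef)
    (i j : Fin N) : |A i j| ≤ Lam := by
  have hd1 : ∀ k, lam ≤ A k k := by
    intro k
    have := quad_single _ h1 k
    simp [Matrix.sub_apply, Matrix.smul_apply, Matrix.one_apply] at this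
    linarith
  have hd2 : ∀ k, A k k ≤ Lam := by
    intro k
    have := quad_single _ h2 k
    simp [Matrix.sub_apply, Matrix.smul_apply, Matrix.one_apply] at this
    linarith
  rcases eq_or_ne i j with h | h
  · subst h
    rw [abs_of_nonneg (le_trans hlam (hd1 i))]
    exact hd2 i
  · have hsym : A j i = A i j := by
      have hh := congrFun (congrFun h1.1 j) i
      simp [Matrix.conjTranspose_apply, Matrix.sub_apply, Matrix.smul_apply,
        Matrix.one_apply, h, Ne.symm h] at hh
      linarith
    have e1 := quad_pair _ h1 i j
    have e2 := quad_pair_sub _ h1 i j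
    simp [Matrix.sub_apply, Matrix.smul_apply, Matrix.one_apply, h, Ne.symm h] at e1 e2
    rw [abs_le]
    constructor <;> nlinarith [hd2 i, hd2 j, hlam, hsym]

lemma le_pucciSup {lam Lam : ℝ} (hlam : 0 < lam) (M A : Matrix (Fin N) (Fin N) ℝ)
    (hA : A.IsSymm) (h1 : (A - lam • (1 : Matrix (Fin N) (Fin N) ℝ)).PosSemidef)
    (h2 : (Lam • (1 : Matrix (Fin N) (Fin N) ℝ) - A).PosSemidef) :
    -(A * M).trace ≤ pucciSup lam Lam M := by
  apply le_csSup
  · refine ⟨Lam * ∑ i, ∑ j, |M j i|, ?_⟩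
    rintro t ⟨B, hB, hB1, hB2, rfl⟩
    rw [trace_explicit, ← Finset.sum_neg_distrib]
    rw [Finset.mul_sum]
    apply Finset.sum_le_sum
    intro i _
    rw [← Finset.sum_neg_distrib, Finset.mul_sum]
    apply Finset.sum_le_sum
    intro j _
    calc -(B i j * M j i) ≤ |B i j * M j i| := neg_le_abs _
      _ = |B i j| * |M j i| := abs_mul _ _
      _ ≤ Lam * |M j i| :=
        mul_le_mul_of_nonneg_right (entry_le hlam.le hB1 hB2 i j) (abs_nonneg _)
  · exact ⟨A, hA, h1, h2, rfl⟩

/-- sharpness of the drift condition. With `u(x) = (1+|x|²)^{-δ/2}` and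
`b(x) = λ(2−β+δ)x/(1+|x|²)` one has
`M⁺_{λ,Λ}(D²u) − b·Du ≥ βδλ(1+|x|²)^{-δ/2-2} ≥ 0` on `ℝ^N`, while
`b(x)·x → λ(2−β+δ) > λ(2−β)` as `|x| → ∞`. -/
theorem stmt13 {N : ℕ} (lam Lam β δ : ℝ) (hlam : 0 < lam) (hle : lam ≤ Lam)
    (hβ : β = Lam / lam * (N - 1) + 1) (hβ2 : 2 < β) (hδ : 0 < δ)
    (u : EuclideanSpace ℝ (Fin N) → ℝ)
    (hu : ∀ x : EuclideanSpace ℝ (Fin N), u x = (1 + ‖x‖ ^ 2) ^ (-(δ / 2)))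
    (b : EuclideanSpace ℝ (Fin N) → EuclideanSpace ℝ (Fin N))
    (hb : ∀ x : EuclideanSpace ℝ (Fin N),
      b x = (lam * (2 - β + δ) / (1 + ‖x‖ ^ 2)) • x) :
    (∀ x : EuclideanSpace ℝ (Fin N),
      pucciSup lam Lam (hess u x) - ⟪b x, gradient u x⟫ ≥
        β * δ * lam * (1 + ‖x‖ ^ 2) ^ (-(δ / 2) - 2) ∧
      (0 : ℝ) ≤ β * δ * lam * (1 + ‖x‖ ^ 2) ^ (-(δ / 2) - 2)) ∧
    Tendsto (fun x : EuclideanSpace ℝ (Fin N) => ⟪b x, x⟫) (Bornology.cobounded _)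
      (nhds (lam * (2 - β + δ))) ∧
    lam * (2 - β + δ) > lam * (2 - β) := by
  obtain rfl : u = fun y : EuclideanSpace ℝ (Fin N) => (1 + ‖y‖ ^ 2) ^ (-(δ / 2)) := funext hu
  obtain rfl : b = fun y : EuclideanSpace ℝ (Fin N) =>
      (lam * (2 - β + δ) / (1 + ‖y‖ ^ 2)) • y := funext hb
  have hβlam : lam * β = Lam * (N - 1) + lam := by
    rw [hβ]; field_simp
  refine ⟨?_, ?_, ?_⟩
  · intro x
    have hpos : (0:ℝ) < 1 + ‖x‖ ^ 2 := by positivity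
    have hR0 : (0:ℝ) ≤ ‖x‖ ^ 2 := by positivity
    have ht : 0 < (1 + ‖x‖ ^ 2) ^ (-(δ/2) - 2) := Real.rpow_pos_of_pos hpos _
    have hRsum : ∑ i, (x i)^2 = ‖x‖ ^ 2 := by
      rw [EuclideanSpace.norm_sq_eq]; simp
    have hs : (1 + ‖x‖ ^ 2) ^ (-(δ/2) - 1)
        = (1 + ‖x‖ ^ 2) ^ (-(δ/2) - 2) * (1 + ‖x‖ ^ 2) := by
      rw [show -(δ/2) - 1 = (-(δ/2) - 2) + 1 by ring, Real.rpow_add hpos, Real.rpow_one]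
    refine ⟨?_, by positivity⟩
    have hgrad : gradient (fun y : EuclideanSpace ℝ (Fin N) => (1 + ‖y‖ ^ 2) ^ (-(δ / 2))) x
        = ((-(δ/2)) * (1 + ‖x‖ ^ 2) ^ (-(δ/2) - 1) * 2) • x :=
      (gradient_base (-(δ/2)) x).gradient
    have hM : hess (fun y : EuclideanSpace ℝ (Fin N) => (1 + ‖y‖ ^ 2) ^ (-(δ / 2))) x
        = Matrix.of fun i j =>
            ((-(δ/2)) * (1 + ‖x‖ ^ 2) ^ (-(δ/2) - 1) * 2) * (if i = j then 1 else 0)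
              + ((-(δ/2) - 1) * (1 + ‖x‖ ^ 2) ^ (-(δ/2) - 2) * 2 * ((-(δ/2)) * 2))
                  * (x i * x j) := by
      ext i j
      exact hess_base (-(δ/2)) x i j
    have hc : 0 ≤ (Lam - lam) / ‖x‖ ^ 2 := div_nonneg (by linarith) hR0
    have hent1 : ∀ i j,
        ((Matrix.of fun i j => (if i = j then Lam else 0)
            - (Lam - lam) / ‖x‖ ^ 2 * (x i * x j))
          - lam • (1 : Matrix (Fin N) (Fin N) ℝ)) i j
        = (if i = j then Lam - lam else 0) - (Lam - lam) / ‖x‖ ^ 2 * (x i * x j) := by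
      intro i j
      simp only [Matrix.sub_apply, Matrix.smul_apply, Matrix.one_apply, Matrix.of_apply,
        smul_eq_mul]
      split_ifs with h <;> ring
    have hent2 : ∀ i j,
        (Lam • (1 : Matrix (Fin N) (Fin N) ℝ)
          - Matrix.of fun i j => (if i = j then Lam else 0)
              - (Lam - lam) / ‖x‖ ^ 2 * (x i * x j)) i j
        = (if i = j then (0:ℝ) else 0)
            - (-((Lam - lam) / ‖x‖ ^ 2)) * (x i * x j) := by
      intro i j
      simp only [Matrix.sub_apply, Matrix.smul_apply, Matrix.one_apply, Matrix.of_apply,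
        smul_eq_mul]
      split_ifs with h <;> ring
    have hAsym : (Matrix.of fun i j => (if i = j then Lam else 0)
        - (Lam - lam) / ‖x‖ ^ 2 * (x i * x j)).IsSymm := by
      show Matrix.transpose _ = _
      ext i j
      simp only [Matrix.transpose_apply, Matrix.of_apply]
      rcases eq_or_ne i j with h | h
      · subst h; ring
      · rw [if_neg h, if_neg (fun hh => h hh.symm)]; ring
    have hvsum : ∀ v : Fin N → ℝ, 0 ≤ ∑ i, (v i)^2 :=
      fun v => Finset.sum_nonneg fun i _ => sq_nonneg _
    have h1 : ((Matrix.of fun i j => (if i = j then Lam else 0)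
          - (Lam - lam) / ‖x‖ ^ 2 * (x i * x j))
        - lam • (1 : Matrix (Fin N) (Fin N) ℝ)).PosSemidef := by
      apply psd_of_quad
      · intro i j; rw [hent1, hent1]
        rcases eq_or_ne i j with h | h
        · subst h; ring
        · rw [if_neg h, if_neg (fun hh => h hh.symm)]; ring
      · intro v
        simp only [hent1]
        rw [quad_form]
        have cauchy := Finset.sum_mul_sq_le_sq_mul_sq Finset.univ (fun i => x i) v
        rw [hRsum] at cauchy
        rcases hR0.eq_or_lt with h0 | hRpos
        · rw [show (Lam - lam) / ‖x‖ ^ 2 = 0 by rw [← h0, div_zero]]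
          nlinarith [mul_nonneg (sub_nonneg.2 hle) (hvsum v)]
        · have h2 := mul_le_mul_of_nonneg_left cauchy hc
          have h3 : (Lam - lam) / ‖x‖ ^ 2 * (‖x‖ ^ 2 * ∑ i, (v i)^2)
              = (Lam - lam) * ∑ i, (v i)^2 := by
            rw [← mul_assoc, div_mul_cancel₀ _ (ne_of_gt hRpos)]
          linarith [h2, h3]
    have h2 : (Lam • (1 : Matrix (Fin N) (Fin N) ℝ)
        - Matrix.of fun i j => (if i = j then Lam else 0)
            - (Lam - lam) / ‖x‖ ^ 2 * (x i * x j)).PosSemidef := by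
      apply psd_of_quad
      · intro i j; rw [hent2, hent2]
        simp only [ite_self]
        ring
      · intro v
        simp only [hent2]
        rw [quad_form]
        nlinarith [mul_nonneg hc (sq_nonneg (∑ i, x i * v i))]
    have hsup := le_pucciSup hlam
      (hess (fun y : EuclideanSpace ℝ (Fin N) => (1 + ‖y‖ ^ 2) ^ (-(δ / 2))) x)
      _ hAsym h1 h2
    have htr : ((Matrix.of fun i j => (if i = j then Lam else 0)
          - (Lam - lam) / ‖x‖ ^ 2 * (x i * x j))
          * hess (fun y : EuclideanSpace ℝ (Fin N) => (1 + ‖y‖ ^ 2) ^ (-(δ / 2))) x).trace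
        = Lam * ((-(δ/2)) * (1 + ‖x‖ ^ 2) ^ (-(δ/2) - 1) * 2) * N
            + Lam * ((-(δ/2) - 1) * (1 + ‖x‖ ^ 2) ^ (-(δ/2) - 2) * 2 * ((-(δ/2)) * 2))
                * ‖x‖ ^ 2
            - (Lam - lam) / ‖x‖ ^ 2 * ((-(δ/2)) * (1 + ‖x‖ ^ 2) ^ (-(δ/2) - 1) * 2) * ‖x‖ ^ 2
            - (Lam - lam) / ‖x‖ ^ 2
                * ((-(δ/2) - 1) * (1 + ‖x‖ ^ 2) ^ (-(δ/2) - 2) * 2 * ((-(δ/2)) * 2))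
                * (‖x‖ ^ 2)^2 := by
      rw [hM, trace_explicit]
      have := trace_form (N := N) Lam ((Lam - lam) / ‖x‖ ^ 2)
        ((-(δ/2)) * (1 + ‖x‖ ^ 2) ^ (-(δ/2) - 1) * 2)
        ((-(δ/2) - 1) * (1 + ‖x‖ ^ 2) ^ (-(δ/2) - 2) * 2 * ((-(δ/2)) * 2))
        (fun i => x i)
      rw [hRsum] at this
      simp only [Matrix.of_apply]
      exact this
    have hinner : ⟪(lam * (2 - β + δ) / (1 + ‖x‖ ^ 2)) • x,
          gradient (fun y : EuclideanSpace ℝ (Fin N) => (1 + ‖y‖ ^ 2) ^ (-(δ / 2))) x⟫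
        = lam * (2 - β + δ) * (-(δ/2)) * 2
            * (1 + ‖x‖ ^ 2) ^ (-(δ/2) - 2) * ‖x‖ ^ 2 := by
      rw [hgrad, real_inner_smul_left, real_inner_smul_right, real_inner_self_eq_norm_sq, hs]
      rw [div_mul_eq_mul_div, div_eq_iff (ne_of_gt hpos)]
      ring
    have hkey : -((Matrix.of fun i j => (if i = j then Lam else 0)
            - (Lam - lam) / ‖x‖ ^ 2 * (x i * x j))
          * hess (fun y : EuclideanSpace ℝ (Fin N) => (1 + ‖y‖ ^ 2) ^ (-(δ / 2))) x).trace
          - (lam * (2 - β + δ) * (-(δ/2)) * 2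
              * (1 + ‖x‖ ^ 2) ^ (-(δ/2) - 2) * ‖x‖ ^ 2)
        ≥ β * δ * lam * (1 + ‖x‖ ^ 2) ^ (-(δ / 2) - 2) := by
      rw [htr]
      rcases hR0.eq_or_lt with h0 | hRpos
      · rw [show (Lam - lam) / ‖x‖ ^ 2 = 0 by rw [← h0, div_zero], ← h0]
        norm_num [Real.one_rpow]
        nlinarith [hβlam, mul_nonneg hδ.le (sub_nonneg.2 hle)]
      · have hRne : ‖x‖ ^ 2 ≠ 0 := ne_of_gt hRpos
        have hcR : (Lam - lam) / ‖x‖ ^ 2 * ‖x‖ ^ 2 = Lam - lam := div_mul_cancel₀ _ hRne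
        rw [ge_iff_le]
        apply le_of_eq
        linear_combination (δ * (1 + ‖x‖ ^ 2) ^ (-(δ/2) - 2) * (1 + ‖x‖ ^ 2)) * hβlam
          - (Lam * δ * (N:ℝ) - (Lam - lam) / ‖x‖ ^ 2 * δ * ‖x‖ ^ 2) * hs
          - (δ * (δ + 2) * (1 + ‖x‖ ^ 2) ^ (-(δ/2) - 2) * ‖x‖ ^ 2
              - δ * (1 + ‖x‖ ^ 2) ^ (-(δ/2) - 2) * (1 + ‖x‖ ^ 2)) * hcR
    beta_reduce
    rw [ge_iff_le, hinner]
    linarith [hsup, hkey]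
  · have hfun : (fun x : EuclideanSpace ℝ (Fin N) =>
        ⟪(lam * (2 - β + δ) / (1 + ‖x‖ ^ 2)) • x, x⟫) =
        (fun n : ℝ => lam * (2 - β + δ) * (1 - 1 / (1 + n ^ 2))) ∘
          (fun x : EuclideanSpace ℝ (Fin N) => ‖x‖) := by
      funext x
      have h0 : (0:ℝ) < 1 + ‖x‖ ^ 2 := by positivity
      simp only [Function.comp_apply, real_inner_smul_left, real_inner_self_eq_norm_sq]
      field_simp
      ring
    rw [hfun]
    have h1 : Tendsto (fun n : ℝ => lam * (2 - β + δ) * (1 - 1 / (1 + n ^ 2))) atTop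
        (nhds (lam * (2 - β + δ))) := by
      have h2 : Tendsto (fun n : ℝ => 1 + n ^ 2) atTop atTop :=
        tendsto_atTop_add_const_left _ _ (tendsto_pow_atTop two_ne_zero)
      have h3 : Tendsto (fun n : ℝ => 1 / (1 + n ^ 2)) atTop (nhds 0) := by
        simpa [one_div, Pi.inv_def] using h2.inv_tendsto_atTop
      have h4 : Tendsto (fun n : ℝ => 1 - 1 / (1 + n ^ 2)) atTop (nhds 1) := by
        simpa using tendsto_const_nhds.sub h3
      have := tendsto_const_nhds (x := lam * (2 - β + δ)) (f := atTop (α := ℝ)) |>.mul h4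
      simpa using this
    exact h1.comp tendsto_norm_cobounded_atTop
  · nlinarith
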